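/- Let φ be a CNF formula with n variables, t literal occurrences, and m clauses. Define the vertex-weighted graph G_φ on seven cliques C¹,…,C⁷ as follows: C¹ has vertices x_j¹ (weight ∞), C² has vertices x_j^{2T}, x_j^{2F} (weight 1), C³–C⁶ each have one vertex per literal occurrence l_i³, l_i⁴, l_i⁵, l_i⁶ (weights ∞, 1, ∞, 1 respectively), C⁷ has vertices c_k⁷ (weight ∞), plus weight-0 dummy vertices d⁴ ∈ C⁴ and d⁶ ∈ C⁶. Non-clique edges: x_j¹x_j^{2T}, x_j¹x_j^{2F}; x_j^{2T}l_i³ when l_i = x_j and x_j^{2F}l_i³ when l_i = ¬x_j; the paths l_i³l_i⁴l_i⁵l_i⁶; and c_k⁷l_i⁶ when l_i occurs in c_k. Then G_φ has a dominating set of total weight at most n + t if and only if φ is satisfiable. -/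

import Mathlib

structure CNF (n : ℕ) where
  clauses : List (List (Bool × Fin n))

def CNF.Satisfiable {n : ℕ} (φ : CNF n) : Prop :=
  ∃ σ : Fin n → Bool, ∀ c ∈ φ.clauses, ∃ l ∈ c, σ l.2 = l.1

abbrev CNF.Occ {n : ℕ} (φ : CNF n) :=
  Σ k : Fin φ.clauses.length, Fin (φ.clauses.get k).length

def CNF.lit {n : ℕ} (φ : CNF n) (o : φ.Occ) : Bool × Fin n :=
  (φ.clauses.get o.1).get o.2

def CNF.t {n : ℕ} (φ : CNF n) : ℕ := (φ.clauses.map List.length).sum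

/-- Vertices of the weighted gadget graph `G_φ` on seven cliques `C¹,…,C⁷`. -/
inductive WVert {n : ℕ} (φ : CNF n) : Type
  | x1 (j : Fin n)          -- C¹
  | x2T (j : Fin n)         -- C²
  | x2F (j : Fin n)         -- C²
  | l3 (o : φ.Occ)          -- C³
  | l4 (o : φ.Occ)          -- C⁴
  | l5 (o : φ.Occ)          -- C⁵
  | l6 (o : φ.Occ)          -- C⁶
  | c7 (k : Fin φ.clauses.length)  -- C⁷
  | d4                      -- dummy in C⁴
  | d6                      -- dummy in C⁶

/-- Which of the seven cliques a vertex belongs to. -/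
def grp {n : ℕ} {φ : CNF n} : WVert φ → Fin 7
  | .x1 _ => 0
  | .x2T _ => 1 | .x2F _ => 1
  | .l3 _ => 2
  | .l4 _ => 3 | .d4 => 3
  | .l5 _ => 4
  | .l6 _ => 5 | .d6 => 5
  | .c7 _ => 6

/-- Vertex weights: `⊤` (infinite) on `C¹, C³, C⁵, C⁷`, `0` on the dummies,
and `1` otherwise. -/
noncomputable def wt {n : ℕ} {φ : CNF n} : WVert φ → ENNReal
  | .x1 _ => ⊤ | .l3 _ => ⊤ | .l5 _ => ⊤ | .c7 _ => ⊤
  | .d4 => 0 | .d6 => 0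
  | .x2T _ => 1 | .x2F _ => 1 | .l4 _ => 1 | .l6 _ => 1

/-- The non-clique edges of `G_φ` (one direction; symmetrized by `fromRel`). -/
def wBase {n : ℕ} (φ : CNF n) : WVert φ → WVert φ → Prop
  | .x1 j, .x2T j' => j = j'
  | .x1 j, .x2F j' => j = j'
  | .x2T j, .l3 o => φ.lit o = (true, j)
  | .x2F j, .l3 o => φ.lit o = (false, j)
  | .l3 o, .l4 o' => o = o'
  | .l4 o, .l5 o' => o = o'
  | .l5 o, .l6 o' => o = o'
  | .c7 k, .l6 o => o.1 = k
  | _, _ => False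

/-- The weighted gadget graph: each `Cᵖ` is a clique, plus the non-clique edges. -/
def GphiW {n : ℕ} (φ : CNF n) : SimpleGraph (WVert φ) :=
  SimpleGraph.fromRel (fun u v => grp u = grp v ∨ wBase φ u v)

def IsDomSet {V : Type*} (G : SimpleGraph V) (D : Finset V) : Prop :=
  ∀ v, v ∉ D → ∃ d ∈ D, G.Adj d v

/-!
A dominating set `D` of finite weight avoids the infinite-weight cliques `C¹, C³, C⁵, C⁷`.
To dominate `x_j¹` it must contain `x_j^{2T}` or `x_j^{2F}`, and to dominate `l_i⁵` it must
contain `l_i⁴` or `l_i⁶`. These are `n + t` disjoint pairs of unit-weight vertices, so within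
the budget `n + t` it contains exactly one vertex of each. Set `σ x_j` true iff `x_j^{2T} ∈ D`.
The clause vertex `c_k⁷` is dominated by some `l_i⁶` with `l_i` in `c_k`, so `l_i⁴ ∉ D`, and
`l_i³` must be dominated from `C²` by the vertex of its variable with the sign of `l_i`: the
literal `l_i` is true. Conversely, a satisfying assignment yields the dominating set made of the
vertices of `C²` encoding its values, `l_i⁶` for true and `l_i⁴` for false occurrences, and the
two weight-zero dummies.
-/

theorem isDomSet_of_forall_exists_eq_or_adj {V : Type*} {G : SimpleGraph V} {D : Finset V}
    (h : ∀ v, ∃ d ∈ D, d = v ∨ G.Adj d v) : IsDomSet G D := by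
  intro v hv
  obtain ⟨d, hd, rfl | hadj⟩ := h v
  · exact absurd hd hv
  · exact ⟨d, hd, hadj⟩

theorem card_le_sum_of_injective {κ V : Type*} [Fintype κ] {f : V → ENNReal} {D : Finset V}
    {g : κ → V} (hg : Function.Injective g) (hgD : ∀ k, g k ∈ D) (hf : ∀ k, f (g k) = 1) :
    (Fintype.card κ : ENNReal) ≤ ∑ v ∈ D, f v := by
  classical
  calc (Fintype.card κ : ENNReal) = ∑ k, f (g k) := by simp [hf]
    _ = ∑ v ∈ Finset.univ.image g, f v := (Finset.sum_image fun _ _ _ _ h => hg h).symm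
    _ ≤ ∑ v ∈ D, f v :=
        Finset.sum_le_sum_of_subset (by simpa [Finset.subset_iff] using hgD)

theorem not_both_mem_of_sum_le_card {ι V : Type*} [Fintype ι] {f : V → ENNReal} {D : Finset V}
    {a b : ι → V} (hab : Function.Injective (Sum.elim a b)) (ha : ∀ i, f (a i) = 1)
    (hb : ∀ i, f (b i) = 1) (hD : ∀ i, a i ∈ D ∨ b i ∈ D)
    (hsum : ∑ v ∈ D, f v ≤ Fintype.card ι) (i : ι) : ¬(a i ∈ D ∧ b i ∈ D) := by
  classical
  rintro ⟨hai, hbi⟩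
  -- one member of every pair together with `b i` makes `card ι + 1` unit-weight elements of `D`
  let pick : Option ι → ι ⊕ ι
    | none => .inr i
    | some j => if a j ∈ D then .inl j else .inr j
  have hpick : Function.Injective pick := by
    rintro (_ | j) (_ | j') h <;> simp only [pick] at h <;> (try split_ifs at h) <;> simp_all
  have hpickD : ∀ k, Sum.elim a b (pick k) ∈ D := by
    rintro (_ | j)
    · exact hbi
    · simp only [pick]
      split_ifs with h
      exacts [h, (hD j).resolve_left h]
  have hunit : ∀ x, f (Sum.elim a b x) = 1 := by
    rintro (j | j)
    exacts [ha j, hb j]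
  have := card_le_sum_of_injective (hab.comp hpick) hpickD fun k => hunit (pick k)
  rw [Fintype.card_option, Nat.cast_succ] at this
  exact (this.trans hsum).not_gt (ENNReal.lt_add_right (ENNReal.natCast_ne_top _) one_ne_zero)

section

variable {n : ℕ} {φ : CNF n}

theorem CNF.card_occ (φ : CNF n) : Fintype.card φ.Occ = φ.t := by
  rw [CNF.t, Fintype.card_sigma]
  simp

theorem GphiW_adj {u v : WVert φ} :
    (GphiW φ).Adj u v ↔ u ≠ v ∧ (grp u = grp v ∨ wBase φ u v ∨ wBase φ v u) := by
  rw [GphiW, SimpleGraph.fromRel_adj, or_or_or_comm, eq_comm (a := grp v), or_self]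

section FiniteWeightNeighbours

variable {d : WVert φ} (hd : wt d ≠ ⊤)
include hd

theorem eq_x2_of_adj_x1 {j : Fin n} (h : (GphiW φ).Adj d (.x1 j)) :
    d = .x2T j ∨ d = .x2F j := by
  cases d <;> simp_all [GphiW_adj, grp, wBase, wt, eq_comm]

theorem eq_l4_or_l6_of_adj_l5 {o : φ.Occ} (h : (GphiW φ).Adj d (.l5 o)) :
    d = .l4 o ∨ d = .l6 o := by
  cases d <;> simp_all [GphiW_adj, grp, wBase, wt, eq_comm]

theorem exists_eq_l6_of_adj_c7 {k : Fin φ.clauses.length} (h : (GphiW φ).Adj d (.c7 k)) :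
    ∃ o : φ.Occ, o.1 = k ∧ d = .l6 o := by
  cases d <;> simp_all [GphiW_adj, grp, wBase, wt]

theorem eq_l4_or_x2_of_adj_l3 {o : φ.Occ} (h : (GphiW φ).Adj d (.l3 o)) :
    d = .l4 o ∨ ∃ j, (d = .x2T j ∧ φ.lit o = (true, j)) ∨ (d = .x2F j ∧ φ.lit o = (false, j)) := by
  cases d <;> simp_all [GphiW_adj, grp, wBase, wt, eq_comm]

end FiniteWeightNeighbours

section FromDomSet

variable {D : Finset (WVert φ)} (hdom : IsDomSet (GphiW φ) D) (hfin : ∀ v ∈ D, wt v ≠ ⊤)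
include hdom hfin

theorem exists_adj_mem_of_wt_eq_top {v : WVert φ} (hv : wt v = ⊤) :
    ∃ d ∈ D, wt d ≠ ⊤ ∧ (GphiW φ).Adj d v := by
  obtain ⟨d, hd, hadj⟩ := hdom v fun hvD => hfin v hvD hv
  exact ⟨d, hd, hfin d hd, hadj⟩

theorem x2T_mem_or_x2F_mem (j : Fin n) : .x2T j ∈ D ∨ .x2F j ∈ D := by
  obtain ⟨d, hd, hd_fin, hadj⟩ := exists_adj_mem_of_wt_eq_top hdom hfin (v := .x1 j) rfl
  rcases eq_x2_of_adj_x1 hd_fin hadj with rfl | rfl <;> simp [hd]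

theorem l6_mem_or_l4_mem (o : φ.Occ) : .l6 o ∈ D ∨ .l4 o ∈ D := by
  obtain ⟨d, hd, hd_fin, hadj⟩ := exists_adj_mem_of_wt_eq_top hdom hfin (v := .l5 o) rfl
  rcases eq_l4_or_l6_of_adj_l5 hd_fin hadj with rfl | rfl <;> simp [hd]

theorem exists_l6_mem (k : Fin φ.clauses.length) : ∃ o : φ.Occ, o.1 = k ∧ .l6 o ∈ D := by
  obtain ⟨d, hd, hd_fin, hadj⟩ := exists_adj_mem_of_wt_eq_top hdom hfin (v := .c7 k) rfl
  obtain ⟨o, rfl, rfl⟩ := exists_eq_l6_of_adj_c7 hd_fin hadj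
  exact ⟨o, rfl, hd⟩

theorem exists_x2_mem_of_l4_notMem {o : φ.Occ} (ho : .l4 o ∉ D) :
    ∃ j, (.x2T j ∈ D ∧ φ.lit o = (true, j)) ∨ (.x2F j ∈ D ∧ φ.lit o = (false, j)) := by
  obtain ⟨d, hd, hd_fin, hadj⟩ := exists_adj_mem_of_wt_eq_top hdom hfin (v := .l3 o) rfl
  rcases eq_l4_or_x2_of_adj_l3 hd_fin hadj with rfl | ⟨j, ⟨rfl, hj⟩ | ⟨rfl, hj⟩⟩
  exacts [absurd hd ho, ⟨j, .inl ⟨hd, hj⟩⟩, ⟨j, .inr ⟨hd, hj⟩⟩]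

end FromDomSet

theorem CNF.satisfiable_of_isDomSet {D : Finset (WVert φ)} (hdom : IsDomSet (GphiW φ) D)
    (hsum : ∑ v ∈ D, wt v ≤ n + φ.t) : φ.Satisfiable := by
  classical
  have hfin : ∀ v ∈ D, wt v ≠ ⊤ :=
    ENNReal.sum_ne_top.mp (ne_top_of_le_ne_top (by simp) hsum)
  have hone := not_both_mem_of_sum_le_card (ι := Fin n ⊕ φ.Occ) (f := wt) (D := D)
    (a := Sum.elim .x2T .l6) (b := Sum.elim .x2F .l4)
    (by rintro ((_ | _) | (_ | _)) ((_ | _) | (_ | _)) h <;> simp_all)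
    (by rintro (_ | _) <;> rfl) (by rintro (_ | _) <;> rfl)
    (by rintro (j | o); exacts [x2T_mem_or_x2F_mem hdom hfin j, l6_mem_or_l4_mem hdom hfin o])
    (by simpa [φ.card_occ] using hsum)
  refine ⟨fun j => decide (.x2T j ∈ D), fun c hc => ?_⟩
  obtain ⟨k, rfl⟩ := List.mem_iff_get.mp hc
  obtain ⟨o, rfl, h6⟩ := exists_l6_mem hdom hfin k
  have h4 : .l4 o ∉ D := fun h4 => hone (.inr o) ⟨h6, h4⟩
  refine ⟨φ.lit o, List.get_mem _ _, ?_⟩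
  obtain ⟨j, ⟨hT, hlit⟩ | ⟨hF, hlit⟩⟩ := exists_x2_mem_of_l4_notMem hdom hfin h4
  · simp [hlit, hT]
  · have hT : .x2T j ∉ D := fun hT => hone (.inl j) ⟨hT, hF⟩
    simp [hlit, hT]

section FromAssignment

variable (σ : Fin n → Bool)

def valueVertex (j : Fin n) : WVert φ := if σ j then .x2T j else .x2F j

def occVertex (o : φ.Occ) : WVert φ :=
  if σ (φ.lit o).2 = (φ.lit o).1 then .l6 o else .l4 o

theorem wt_valueVertex (j : Fin n) : wt (valueVertex (φ := φ) σ j) = 1 := by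
  unfold valueVertex; split <;> rfl

theorem wt_occVertex (o : φ.Occ) : wt (occVertex σ o) = 1 := by
  unfold occVertex; split <;> rfl

open Classical in
noncomputable def assignmentDomSet : Finset (WVert φ) :=
  insert .d4 (insert .d6 (Finset.univ.image (Sum.elim (valueVertex σ) (occVertex σ))))

theorem sum_wt_assignmentDomSet_le : ∑ v ∈ assignmentDomSet (φ := φ) σ, wt v ≤ n + φ.t := by
  classical
  rw [assignmentDomSet, Finset.sum_insert_zero (show wt .d4 = 0 from rfl),
    Finset.sum_insert_zero (show wt .d6 = 0 from rfl)]
  calc _ ≤ ∑ i, wt (Sum.elim (valueVertex σ) (occVertex (φ := φ) σ) i) :=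
        Finset.sum_image_le_of_nonneg fun _ _ => zero_le
    _ = ∑ _ : Fin n ⊕ φ.Occ, (1 : ENNReal) := by
        refine Finset.sum_congr rfl ?_
        rintro (j | o) -
        exacts [wt_valueVertex σ j, wt_occVertex σ o]
    _ = n + φ.t := by simp [φ.card_occ]

theorem valueVertex_mem_assignmentDomSet (j : Fin n) :
    valueVertex σ j ∈ assignmentDomSet (φ := φ) σ := by
  simp [assignmentDomSet]

theorem occVertex_mem_assignmentDomSet (o : φ.Occ) : occVertex σ o ∈ assignmentDomSet σ := by
  simp [assignmentDomSet]

theorem isDomSet_assignmentDomSet (hσ : ∀ c ∈ φ.clauses, ∃ l ∈ c, σ l.2 = l.1) :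
    IsDomSet (GphiW φ) (assignmentDomSet σ) := by
  refine isDomSet_of_forall_exists_eq_or_adj fun v => ?_
  have hval := valueVertex_mem_assignmentDomSet (φ := φ) σ
  have hocc := occVertex_mem_assignmentDomSet (φ := φ) σ
  cases v with
  | x1 j | x2T j | x2F j =>
    refine ⟨_, hval j, ?_⟩
    unfold valueVertex; split <;> simp [GphiW_adj, grp, wBase]
  | l3 o =>
    by_cases hs : σ (φ.lit o).2 = (φ.lit o).1
    · refine ⟨_, hval (φ.lit o).2, .inr ?_⟩
      rcases hlit : φ.lit o with ⟨b, j⟩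
      simp only [hlit] at hs
      cases b <;> simp [valueVertex, hs, hlit, GphiW_adj, grp, wBase]
    · exact ⟨_, hocc o, .inr (by simp [occVertex, hs, GphiW_adj, grp, wBase])⟩
  | l5 o =>
    refine ⟨_, hocc o, .inr ?_⟩
    unfold occVertex; split <;> simp [GphiW_adj, grp, wBase]
  | c7 k =>
    obtain ⟨l, hl, hsat⟩ := hσ _ (List.get_mem _ k)
    obtain ⟨i, rfl⟩ := List.mem_iff_get.mp hl
    have hs : σ (φ.lit ⟨k, i⟩).2 = (φ.lit ⟨k, i⟩).1 := hsat
    exact ⟨_, hocc ⟨k, i⟩, .inr (by simp [occVertex, hs, GphiW_adj, grp, wBase])⟩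
  | l4 o | d4 => exact ⟨.d4, by simp [assignmentDomSet], by simp [GphiW_adj, grp]⟩
  | l6 o | d6 => exact ⟨.d6, by simp [assignmentDomSet], by simp [GphiW_adj, grp]⟩

end FromAssignment

end

theorem stmt_18_general {n : ℕ} (φ : CNF n) :
    (∃ D : Finset (WVert φ), IsDomSet (GphiW φ) D ∧
      ∑ v ∈ D, wt v ≤ (n : ENNReal) + (φ.t : ENNReal)) ↔
    φ.Satisfiable := by
  constructor
  · rintro ⟨D, hdom, hsum⟩
    exact φ.satisfiable_of_isDomSet hdom hsum
  · rintro ⟨σ, hσ⟩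
    exact ⟨assignmentDomSet σ, isDomSet_assignmentDomSet σ hσ, sum_wt_assignmentDomSet_le σ⟩

theorem stmt_18 {n : ℕ} (φ : CNF n) (h2 : ∀ c ∈ φ.clauses, 2 ≤ c.length) :
    (∃ D : Finset (WVert φ), IsDomSet (GphiW φ) D ∧
      ∑ v ∈ D, wt v ≤ (n : ENNReal) + (φ.t : ENNReal)) ↔
    φ.Satisfiable :=
  stmt_18_general φ
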